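/- Let q ≥ 3 be an integer and B ∈ (0,1). Let P be a path with ℓ ≥ 2 vertices and endpoints u, v. Then for all colours c, c' ∈ [q], it holds that μ_P(σ_u = c, σ_v = c') ≥ B/(q(B+q−1)), where μ_P is the q-state Potts distribution on P with parameter B. -/

import Mathlib

open scoped Classical

/-- Number of monochromatic edges of the configuration `σ` in the graph `G`. -/
noncomputable def mEdges {W : Type} [Fintype W] (G : SimpleGraph W) {q : ℕ}
    (σ : W → Fin q) : ℕ :=
  (Finset.univ.filter fun e : Sym2 W => e ∈ G.edgeSet ∧ ∀ x ∈ e, ∀ y ∈ e, σ x = σ y).card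

/-- Probability of the event `A` under the `q`-state Potts distribution on `G`
with parameter `B`. -/
noncomputable def pottsPr {W : Type} [Fintype W] (G : SimpleGraph W) (q : ℕ) (B : ℝ)
    (A : Set (W → Fin q)) : ℝ :=
  (∑ σ : W → Fin q, if σ ∈ A then B ^ mEdges G σ else 0) /
    ∑ σ : W → Fin q, B ^ mEdges G σ

/-!
Write `n = ℓ - 1` for the number of edges and `f x y = if x = y then B else 1` for the edge
weight, so that the Potts weight of a configuration is the product of `f` along the path. Every
row of `f` sums to `B + q - 1`, so summing out the vertices one at a time from the far end gives
`Z = q (B + q - 1)ⁿ`. With both endpoints pinned, sum out all but the last vertex the same way: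
whatever the colour of its neighbour, the last edge has weight at least `B` (as `B < 1`), so the
pinned weight is at least `B (B + q - 1)ⁿ⁻¹`.
-/

open Finset

section PathWeight

variable {α : Type*} (f : α → α → ℝ)

noncomputable def pathWeight (n : ℕ) (σ : Fin (n + 1) → α) : ℝ :=
  ∏ i : Fin n, f (σ i.castSucc) (σ i.succ)

variable {f}

lemma pathWeight_snoc (n : ℕ) (τ : Fin (n + 1) → α) (y : α) :
    pathWeight f (n + 1) (Fin.snoc τ y) = pathWeight f n τ * f (τ (Fin.last n)) y := by
  simp only [pathWeight, Fin.prod_univ_castSucc, Fin.succ_castSucc, Fin.snoc_castSucc,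
    Fin.succ_last, Fin.snoc_last]

lemma pathWeight_nonneg (hf : ∀ x y, 0 ≤ f x y) (n : ℕ) (σ : Fin (n + 1) → α) :
    0 ≤ pathWeight f n σ :=
  prod_nonneg fun _ _ => hf _ _

variable [Fintype α]

lemma sum_pi_fin_succ_eq_sum_snoc {β : Type*} [AddCommMonoid β] (n : ℕ)
    (F : (Fin (n + 1) → α) → β) : ∑ σ, F σ = ∑ τ : Fin n → α, ∑ y, F (Fin.snoc τ y) := by
  rw [← Fintype.sum_equiv (Fin.snocEquiv fun _ => α) _ F fun _ => rfl,
    Fintype.sum_prod_type, sum_comm]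
  rfl

lemma sum_pathWeight_of_head_eq {s : ℝ} (hs : ∀ x, ∑ y, f x y = s) (c : α) (n : ℕ) :
    ∑ σ : Fin (n + 1) → α with σ 0 = c, pathWeight f n σ = s ^ n := by
  induction n with
  | zero =>
    rw [sum_filter, sum_pi_fin_succ_eq_sum_snoc]
    simp [pathWeight, Fin.snoc]
  | succ n ih =>
    rw [pow_succ, ← ih, sum_filter, sum_filter, sum_mul, sum_pi_fin_succ_eq_sum_snoc]
    refine sum_congr rfl fun τ _ => ?_
    simp only [Fin.snoc_apply_zero, pathWeight_snoc]
    split_ifs <;> simp [← mul_sum, hs]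

lemma sum_pathWeight {s : ℝ} (hs : ∀ x, ∑ y, f x y = s) (n : ℕ) :
    ∑ σ : Fin (n + 1) → α, pathWeight f n σ = Fintype.card α * s ^ n := by
  rw [← sum_fiberwise univ (fun σ => σ 0)]
  simp [sum_pathWeight_of_head_eq hs]

lemma mul_pow_le_sum_pathWeight_of_ends_eq (hf : ∀ x y, 0 ≤ f x y) {s : ℝ}
    (hs : ∀ x, ∑ y, f x y = s) {β : ℝ} {c' : α} (hβ : ∀ x, β ≤ f x c') (c : α) (n : ℕ) :
    β * s ^ n ≤
      ∑ σ : Fin (n + 2) → α with σ 0 = c ∧ σ (Fin.last _) = c', pathWeight f (n + 1) σ :=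
  calc β * s ^ n = ∑ τ : Fin (n + 1) → α with τ 0 = c, pathWeight f n τ * β := by
        rw [← sum_mul, sum_pathWeight_of_head_eq hs, mul_comm]
    _ ≤ ∑ τ : Fin (n + 1) → α with τ 0 = c, pathWeight f n τ * f (τ (Fin.last n)) c' :=
        sum_le_sum fun τ _ =>
          mul_le_mul_of_nonneg_left (α := ℝ) (hβ _) (pathWeight_nonneg hf n τ)
    _ = _ := by
        rw [sum_filter, sum_filter, sum_pi_fin_succ_eq_sum_snoc (n + 1)]
        refine sum_congr rfl fun τ _ => ?_
        simp [Fin.snoc_apply_zero, pathWeight_snoc, ite_and]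

end PathWeight

section Potts

lemma sum_ite_eq_add_card_sub_one {α : Type*} [Fintype α] [DecidableEq α] (B : ℝ) (x : α) :
    ∑ y, (if x = y then B else 1) = B + Fintype.card α - 1 := by
  rw [sum_ite, filter_eq, filter_ne]
  simp [Nat.cast_sub (Fintype.card_pos_iff.mpr ⟨x⟩)]
  ring

lemma pathGraph_edgeSet (n : ℕ) :
    (SimpleGraph.pathGraph (n + 1)).edgeSet =
      Set.range fun i : Fin n => s(i.castSucc, i.succ) := by
  ext e
  induction e using Sym2.ind with
  | h u v =>
    simp only [SimpleGraph.mem_edgeSet, SimpleGraph.pathGraph_adj, Set.mem_range, Sym2.eq_iff]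
    constructor
    · rintro (h | h)
      · exact ⟨⟨u, by omega⟩, Or.inl ⟨rfl, Fin.ext h⟩⟩
      · exact ⟨⟨v, by omega⟩, Or.inr ⟨rfl, Fin.ext h⟩⟩
    · rintro ⟨y, ⟨rfl, rfl⟩ | ⟨rfl, rfl⟩⟩ <;> simp

lemma mEdges_pathGraph {q : ℕ} (n : ℕ) (σ : Fin (n + 1) → Fin q) :
    mEdges (SimpleGraph.pathGraph (n + 1)) σ = #{i : Fin n | σ i.castSucc = σ i.succ} := by
  have edge_injective : Function.Injective fun i : Fin n => s(i.castSucc, i.succ) := by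
    intro i j h
    rcases Sym2.eq_iff.1 h with ⟨h, -⟩ | ⟨h₁, h₂⟩
    · exact Fin.castSucc_injective _ h
    · simp only [Fin.ext_iff, Fin.val_castSucc, Fin.val_succ] at h₁ h₂
      omega
  rw [mEdges, ← card_map ⟨_, edge_injective⟩]
  congr 1
  ext e
  simp only [mem_filter, mem_univ, true_and, mem_map, pathGraph_edgeSet, Set.mem_range,
    Function.Embedding.coeFn_mk]
  constructor
  · rintro ⟨⟨i, rfl⟩, hmono⟩
    exact ⟨i, hmono _ (Sym2.mem_mk_left _ _) _ (Sym2.mem_mk_right _ _), rfl⟩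
  · rintro ⟨i, h, rfl⟩
    refine ⟨⟨i, rfl⟩, ?_⟩
    simp [h]

lemma pow_mEdges_pathGraph {q : ℕ} (B : ℝ) (n : ℕ) (σ : Fin (n + 1) → Fin q) :
    B ^ mEdges (SimpleGraph.pathGraph (n + 1)) σ =
      pathWeight (fun x y => if x = y then B else 1) n σ := by
  rw [mEdges_pathGraph, pathWeight, ← prod_const, prod_filter]

lemma pottsPr_pathGraph (q : ℕ) (B : ℝ) (n : ℕ) (A : Set (Fin (n + 1) → Fin q)) :
    pottsPr (SimpleGraph.pathGraph (n + 1)) q B A =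
      (∑ σ with σ ∈ A, pathWeight (fun x y => if x = y then B else 1) n σ) /
        (q * (B + q - 1) ^ n) := by
  have total := sum_pathWeight (sum_ite_eq_add_card_sub_one (α := Fin q) B) n
  rw [Fintype.card_fin] at total
  rw [pottsPr, ← total, sum_filter]
  simp only [pow_mEdges_pathGraph]
  -- `pottsPr` sums over a `univ` built from classical decidable equality on `Fin (n + 1)`
  congr 1 <;> congr <;> exact Subsingleton.elim _ _

end Potts

theorem stmt17 (q : ℕ) (B : ℝ) (hB : B ∈ Set.Ioo (0 : ℝ) 1)
    (ℓ : ℕ) (hℓ : 2 ≤ ℓ) (c c' : Fin q) :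
    B / ((q : ℝ) * (B + (q : ℝ) - 1)) ≤
      pottsPr (SimpleGraph.pathGraph ℓ) q B
        {σ | σ ⟨0, by omega⟩ = c ∧ σ ⟨ℓ - 1, by omega⟩ = c'} := by
  obtain ⟨hB₀, hB₁⟩ := hB
  obtain ⟨n, rfl⟩ : ∃ n, ℓ = n + 2 := ⟨ℓ - 2, by omega⟩
  have hq : (1 : ℝ) ≤ q := Nat.one_le_cast.2 c.pos
  have hs : 0 < B + q - 1 := by linarith
  have pinned := mul_pow_le_sum_pathWeight_of_ends_eq (fun x y => by split_ifs <;> linarith)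
    (sum_ite_eq_add_card_sub_one B) (fun x => show B ≤ if x = c' then B else 1 by
      split_ifs <;> linarith) c n
  rw [Fintype.card_fin] at pinned
  rw [pottsPr_pathGraph]
  calc B / (q * (B + q - 1)) = B * (B + q - 1) ^ n / (q * (B + q - 1) ^ (n + 1)) := by
        field_simp
        ring
    _ ≤ _ := div_le_div_of_nonneg_right pinned (by positivity)
    _ = _ := by
        congr 2
        ext σ
        simp only [mem_filter, Set.mem_ofPred_eq]
        rfl
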